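/- arXiv:0708.4073 — 4 statements merged into one kernel-verified Lean document; each statement's English description precedes it below -/
import Mathlib

section
/- Let A be a unital C*-algebra and let u₁, u₂ be unitaries in A with ‖uᵢ − 1‖ < 1/2 for i = 1, 2. Writing 2πi·hᵢ = log uᵢ (using the principal branch of log via the power series log z = −∑_{n≥1}(1−z)ⁿ/n), we have ‖h₁ − h₂‖ ≤ π⁻¹‖u₁ − u₂‖. -/
/-! Writing `uᵢ = 1 - aᵢ`, the series `log(1 - a) = -∑ aⁿ⁺¹/(n+1)` is Lipschitz with constant
`(1 - r)⁻¹` on the ball `‖a‖ ≤ r < 1`, because the telescoping identity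
`aⁿ⁺¹ - bⁿ⁺¹ = a (aⁿ - bⁿ) + (a - b) bⁿ` bounds its `n`-th term by `rⁿ ‖a - b‖` even when `a` and `b`
do not commute. At `r = 1/2` the constant is `2`, and dividing by `‖2πi‖ = 2π` gives `π⁻¹`. -/

open scoped Real

/-- The logarithm defined by the absolutely convergent power series
`log z = -∑_{n≥1} (1-z)ⁿ/n`, applied in a Banach algebra. -/
noncomputable def seriesLog {A : Type*} [NormedRing A] [NormedAlgebra ℂ A] (u : A) : A :=
  -∑' n : ℕ, ((n + 1 : ℂ))⁻¹ • (1 - u) ^ (n + 1)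

theorem norm_pow_succ_sub_pow_succ_le {A : Type*} [NormedRing A] {a b : A} {r : ℝ}
    (ha : ‖a‖ ≤ r) (hb : ‖b‖ ≤ r) (n : ℕ) :
    ‖a ^ (n + 1) - b ^ (n + 1)‖ ≤ (n + 1) * r ^ n * ‖a - b‖ := by
  induction n with
  | zero => simp
  | succ n ih =>
    have hb_pow : ‖b ^ (n + 1)‖ ≤ r ^ (n + 1) :=
      (norm_pow_le' b n.succ_pos).trans (pow_le_pow_left₀ (norm_nonneg b) hb _)
    have telescope : a ^ (n + 2) - b ^ (n + 2) =
        a * (a ^ (n + 1) - b ^ (n + 1)) + (a - b) * b ^ (n + 1) := by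
      rw [mul_sub, sub_mul, ← pow_succ', ← pow_succ']
      abel
    calc ‖a ^ (n + 2) - b ^ (n + 2)‖
        ≤ ‖a‖ * ‖a ^ (n + 1) - b ^ (n + 1)‖ + ‖a - b‖ * ‖b ^ (n + 1)‖ := by
          rw [telescope]
          exact (norm_add_le _ _).trans (add_le_add (norm_mul_le _ _) (norm_mul_le _ _))
      _ ≤ r * ((n + 1) * r ^ n * ‖a - b‖) + ‖a - b‖ * r ^ (n + 1) := by
          gcongr; exact (norm_nonneg a).trans ha
      _ = ((n + 1 : ℕ) + 1) * r ^ (n + 1) * ‖a - b‖ := by push_cast; ring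

theorem norm_inv_natCast_add_one (n : ℕ) : ‖((n + 1 : ℂ))⁻¹‖ = ((n : ℝ) + 1)⁻¹ := by
  rw [norm_inv]
  exact_mod_cast congrArg Inv.inv (RCLike.norm_natCast (K := ℂ) (n + 1))

section seriesLog

variable {A : Type*} [NormedRing A] [NormedAlgebra ℂ A]

theorem summable_inv_natCast_add_one_smul_pow [CompleteSpace A] {c : A} (hc : ‖c‖ < 1) :
    Summable fun n : ℕ => ((n + 1 : ℂ))⁻¹ • c ^ (n + 1) := by
  refine .of_norm_bounded ((summable_geometric_of_lt_one (norm_nonneg c) hc).mul_right ‖c‖)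
    fun n => ?_
  have hinv : ((n : ℝ) + 1)⁻¹ ≤ 1 := inv_le_one_of_one_le₀ (by linarith [n.cast_nonneg (α := ℝ)])
  calc ‖((n + 1 : ℂ))⁻¹ • c ^ (n + 1)‖ ≤ ((n : ℝ) + 1)⁻¹ * ‖c ^ (n + 1)‖ := by
        rw [norm_smul, norm_inv_natCast_add_one]
    _ ≤ 1 * ‖c‖ ^ (n + 1) := by gcongr; exact norm_pow_le' c n.succ_pos
    _ = ‖c‖ ^ n * ‖c‖ := by rw [one_mul, pow_succ]

theorem seriesLog_sub_seriesLog [CompleteSpace A] {u v : A} (hu : ‖1 - u‖ < 1)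
    (hv : ‖1 - v‖ < 1) :
    seriesLog u - seriesLog v =
      ∑' n : ℕ, ((n + 1 : ℂ))⁻¹ • ((1 - v) ^ (n + 1) - (1 - u) ^ (n + 1)) := by
  simp only [seriesLog, smul_sub, neg_sub_neg]
  exact ((summable_inv_natCast_add_one_smul_pow hv).tsum_sub
    (summable_inv_natCast_add_one_smul_pow hu)).symm

theorem norm_seriesLog_sub_le [CompleteSpace A] {u v : A} {r : ℝ} (hr : r < 1)
    (hu : ‖u - 1‖ ≤ r) (hv : ‖v - 1‖ ≤ r) :
    ‖seriesLog u - seriesLog v‖ ≤ (1 - r)⁻¹ * ‖u - v‖ := by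
  rw [← norm_sub_rev] at hu hv
  have hr₀ : 0 ≤ r := (norm_nonneg _).trans hu
  rw [seriesLog_sub_seriesLog (hu.trans_lt hr) (hv.trans_lt hr)]
  refine tsum_of_norm_bounded ((hasSum_geometric_of_lt_one hr₀ hr).mul_right ‖u - v‖) fun n => ?_
  have hn : (n : ℝ) + 1 ≠ 0 := by positivity
  calc ‖((n + 1 : ℂ))⁻¹ • ((1 - v) ^ (n + 1) - (1 - u) ^ (n + 1))‖
      ≤ ((n : ℝ) + 1)⁻¹ * ((n + 1) * r ^ n * ‖(1 - v) - (1 - u)‖) := by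
        rw [norm_smul, norm_inv_natCast_add_one]
        gcongr
        exact norm_pow_succ_sub_pow_succ_le hv hu n
    _ = r ^ n * ‖u - v‖ := by
        rw [sub_sub_sub_cancel_left, ← mul_assoc, ← mul_assoc, inv_mul_cancel₀ hn, one_mul]

end seriesLog

theorem log_unitary_dist_le_general {A : Type*} [NormedRing A]
    [NormedAlgebra ℂ A] [CompleteSpace A]
    (u₁ u₂ : A)
    (h₁' : ‖u₁ - 1‖ < 1 / 2) (h₂' : ‖u₂ - 1‖ < 1 / 2)
    (h₁ h₂ : A)
    (hh₁ : ((2 * π : ℝ) * Complex.I) • h₁ = seriesLog u₁)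
    (hh₂ : ((2 * π : ℝ) * Complex.I) • h₂ = seriesLog u₂) :
    ‖h₁ - h₂‖ ≤ π⁻¹ * ‖u₁ - u₂‖ := by
  have hlog := norm_seriesLog_sub_le (by norm_num) h₁'.le h₂'.le
  have hscalar : ‖((2 * π : ℝ) * Complex.I)‖ = 2 * π := by
    simp [abs_of_pos Real.pi_pos]
  rw [← hh₁, ← hh₂, ← smul_sub, norm_smul, hscalar] at hlog
  rw [inv_mul_eq_div, le_div_iff₀ Real.pi_pos]
  norm_num at hlog
  linarith

/-- If `u₁, u₂` are unitaries in a unital C*-algebra with `‖uᵢ - 1‖ < 1/2` and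
`hᵢ = (2πi)⁻¹ log uᵢ`, then `‖h₁ - h₂‖ ≤ π⁻¹ ‖u₁ - u₂‖`. -/
theorem log_unitary_dist_le {A : Type*} [NormedRing A] [StarRing A] [CStarRing A]
    [NormedAlgebra ℂ A] [CompleteSpace A] [StarModule ℂ A]
    (u₁ u₂ : A) (hu₁ : u₁ ∈ unitary A) (hu₂ : u₂ ∈ unitary A)
    (h₁' : ‖u₁ - 1‖ < 1 / 2) (h₂' : ‖u₂ - 1‖ < 1 / 2)
    (h₁ h₂ : A)
    (hh₁ : ((2 * π : ℝ) * Complex.I) • h₁ = seriesLog u₁)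
    (hh₂ : ((2 * π : ℝ) * Complex.I) • h₂ = seriesLog u₂) :
    ‖h₁ - h₂‖ ≤ π⁻¹ * ‖u₁ - u₂‖ :=
  log_unitary_dist_le_general u₁ u₂ h₁' h₂' h₁ h₂ hh₁ hh₂
end

section
/- Let u : [0,1] → U(Mₙ) be a path of unitary n×n complex matrices with Lipschitz constant at most C (with respect to operator norm). Suppose λ : [0,1] → 𝕋 ⊂ ℂ is a continuous function such that λ(t) is an eigenvalue of u(t) for every t ∈ [0,1]. Then λ is Lipschitz with constant at most C. -/
open scoped Matrix.Norms.L2Operator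
open Set Filter Topology

/-!
Every eigenvalue of `u t` lies within `‖u t - u s‖ ≤ C |t - s|` of the spectrum of `u s`
(Bauer–Fike for the normal element `u s`: the resolvent of a normal element has norm the
inverse distance to its spectrum). The spectrum of `u s` is finite and `λ` is continuous, so
for `t` close to `s` the nearby spectral point must be `λ s` itself; this gives the Lipschitz
bound locally at each point, and a fencing (mean value) argument on the interval makes it global.
-/

theorem IsStarNormal.exists_mem_spectrum_norm_sub_le {A : Type*} [CStarAlgebra A] (a : A)
    [IsStarNormal a] {b : A} {z : ℂ} (hz : z ∈ spectrum ℂ b) :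
    ∃ μ ∈ spectrum ℂ a, ‖z - μ‖ ≤ ‖b - a‖ := by
  have : Nontrivial A := not_subsingleton_iff_nontrivial.1 fun _ => by
    simp [spectrum.of_subsingleton] at hz
  obtain ⟨μ, hμ, hmin⟩ := (spectrum.isCompact a).exists_isMinOn (spectrum.nonempty a)
    (continuous_const.sub continuous_id).norm.continuousOn (f := fun w : ℂ => ‖z - w‖)
  refine ⟨μ, hμ, not_lt.1 fun hlt => hz ?_⟩
  have hgap : 0 < ‖z - μ‖ := (norm_nonneg _).trans_lt hlt
  have hne : ∀ w ∈ spectrum ℂ a, z - w ≠ 0 := fun w hw =>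
    norm_pos_iff.1 (hgap.trans_le (hmin hw))
  set v := cfcUnits (fun w : ℂ => z - w) a hne
  have hv : (v : A) = algebraMap ℂ A z - a := by
    show cfc (fun w : ℂ => z - w) a = _
    rw [cfc_sub (fun _ : ℂ => z) (fun w => w) a, cfc_const z a, cfc_id' ℂ a]
  have hv_inv : ‖(↑v⁻¹ : A)‖ ≤ ‖z - μ‖⁻¹ :=
    norm_cfc_le (by positivity) fun w hw => by
      rw [norm_inv]
      exact inv_anti₀ hgap (hmin hw)
  refine (v.ofNearby (algebraMap ℂ A z - b) ?_).isUnit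
  rw [hv, sub_sub_sub_cancel_left, norm_sub_rev]
  exact hlt.trans_le ((le_inv_comm₀ hgap (Units.norm_pos _)).2 hv_inv)

theorem Set.Finite.eventually_dist_le_of_tendsto {α E : Type*} [MetricSpace E] {F : Set E}
    (hF : F.Finite) {l : Filter α} {y : α → E} {x : E} {ε : α → ℝ}
    (hy : Tendsto y l (𝓝 x)) (hε : Tendsto ε l (𝓝 0))
    (h : ∀ᶠ w in l, ∃ μ ∈ F, dist (y w) μ ≤ ε w) : ∀ᶠ w in l, dist (y w) x ≤ ε w := by
  have hfar : ∀ μ ∈ F \ {x}, ∀ᶠ w in l, ε w < dist (y w) μ := fun μ hμ => by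
    have hlim := (hy.dist (tendsto_const_nhds (x := μ))).sub hε
    rw [sub_zero] at hlim
    filter_upwards [hlim.eventually (lt_mem_nhds (dist_pos.2 (Ne.symm hμ.2)))] with w hw
    exact sub_pos.1 hw
  filter_upwards [h, hF.sdiff.eventually_all.2 hfar] with w ⟨μ, hμF, hμ⟩ hfar
  obtain rfl : μ = x := by_contra fun hne => (hfar μ ⟨hμF, hne⟩).not_ge hμ
  exact hμ

theorem Set.OrdConnected.dist_le_mul_dist_of_eventually {E : Type*} [PseudoMetricSpace E]
    {f : ℝ → E} {s : Set ℝ} {C : ℝ} (hs : s.OrdConnected) (hf : ContinuousOn f s)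
    (h : ∀ x ∈ s, ∀ᶠ z in 𝓝[s] x, dist (f z) (f x) ≤ C * dist z x) :
    ∀ x ∈ s, ∀ y ∈ s, dist (f x) (f y) ≤ C * dist x y := by
  suffices ∀ x ∈ s, ∀ y ∈ s, x ≤ y → dist (f y) (f x) ≤ C * (y - x) by
    intro x hx y hy
    rcases le_total x y with hxy | hyx
    · rw [dist_comm, Real.dist_eq, abs_sub_comm, abs_of_nonneg (sub_nonneg.2 hxy)]
      exact this x hx y hy hxy
    · rw [Real.dist_eq, abs_of_nonneg (sub_nonneg.2 hyx)]
      exact this y hy x hx hyx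
  intro x hx y hy hxy
  have hsub : Icc x y ⊆ s := hs.out hx hy
  refine image_le_of_liminf_slope_right_le_deriv_boundary (f := fun z => dist (f z) (f x))
    (B := fun z => C * (z - x)) (B' := fun _ => C) (by have := hf.mono hsub; fun_prop)
    (by simp) (by fun_prop) (fun w _ => ?_) (fun w hw r hr => ?_) ⟨hxy, le_rfl⟩
  · simpa using ((hasDerivWithinAt_id w _).sub_const x).const_mul C
  have hnhds : 𝓝[>] w ≤ 𝓝[s] w :=
    nhdsWithin_le_of_mem (mem_of_superset (Ioo_mem_nhdsGT hw.2)
      (Ioo_subset_Icc_self.trans ((Icc_subset_Icc_left hw.1).trans hsub)))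
  refine (((h w (hsub (Ico_subset_Icc_self hw))).filter_mono hnhds).and
    self_mem_nhdsWithin).mono (fun z ⟨hz, hz_gt⟩ => ?_) |>.frequently
  have hwz : 0 < z - w := sub_pos.2 hz_gt
  rw [slope_def_field, div_lt_iff₀ hwz]
  calc dist (f z) (f x) - dist (f w) (f x) ≤ dist (f z) (f w) := by
        linarith [dist_triangle (f z) (f w) (f x)]
    _ ≤ C * (z - w) := by rwa [Real.dist_eq, abs_of_pos hwz] at hz
    _ < r * (z - w) := mul_lt_mul_of_pos_right hr hwz

theorem eigenvalue_path_lipschitz_general {n : ℕ} (C : ℝ)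
    (u : ℝ → Matrix (Fin n) (Fin n) ℂ)
    (hu : ∀ t ∈ Icc (0 : ℝ) 1, u t ∈ unitary (Matrix (Fin n) (Fin n) ℂ))
    (hLip : ∀ s ∈ Icc (0 : ℝ) 1, ∀ t ∈ Icc (0 : ℝ) 1, ‖u s - u t‖ ≤ C * |s - t|)
    (lam : ℝ → ℂ) (hcont : ContinuousOn lam (Icc (0 : ℝ) 1))
    (hsp : ∀ t ∈ Icc (0 : ℝ) 1, lam t ∈ spectrum ℂ (u t)) :
    ∀ s ∈ Icc (0 : ℝ) 1, ∀ t ∈ Icc (0 : ℝ) 1, ‖lam s - lam t‖ ≤ C * |s - t| := by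
  have hloc : ∀ x ∈ Icc (0 : ℝ) 1,
      ∀ᶠ z in 𝓝[Icc 0 1] x, dist (lam z) (lam x) ≤ C * dist z x := by
    intro x hx
    have := isStarNormal_of_mem_unitary (hu x hx)
    refine (Matrix.finite_spectrum (u x)).eventually_dist_le_of_tendsto (hcont x hx) ?_ ?_
    · have : Continuous fun z => C * dist z x := by fun_prop
      simpa using (this.tendsto x).mono_left nhdsWithin_le_nhds
    · filter_upwards [self_mem_nhdsWithin] with z hz
      obtain ⟨μ, hμ, hle⟩ := IsStarNormal.exists_mem_spectrum_norm_sub_le (u x) (hsp z hz)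
      refine ⟨μ, hμ, ?_⟩
      simpa only [Complex.dist_eq, Real.dist_eq] using hle.trans (hLip z hz x hx)
  simpa only [Complex.dist_eq, Real.dist_eq] using
    ordConnected_Icc.dist_le_mul_dist_of_eventually hcont hloc

/-- If `u : [0,1] → U(Mₙ)` is a path of unitary matrices which is Lipschitz with constant `C`
(in the operator norm) and `λ : [0,1] → 𝕋` is a continuous selection of eigenvalues of `u(t)`,
then `λ` is Lipschitz with constant `C`. -/
theorem eigenvalue_path_lipschitz {n : ℕ} (C : ℝ)
    (u : ℝ → Matrix (Fin n) (Fin n) ℂ)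
    (hu : ∀ t ∈ Icc (0 : ℝ) 1, u t ∈ unitary (Matrix (Fin n) (Fin n) ℂ))
    (hLip : ∀ s ∈ Icc (0 : ℝ) 1, ∀ t ∈ Icc (0 : ℝ) 1, ‖u s - u t‖ ≤ C * |s - t|)
    (lam : ℝ → ℂ) (hcont : ContinuousOn lam (Icc (0 : ℝ) 1))
    (habs : ∀ t ∈ Icc (0 : ℝ) 1, ‖lam t‖ = 1)
    (hsp : ∀ t ∈ Icc (0 : ℝ) 1, lam t ∈ spectrum ℂ (u t)) :
    ∀ s ∈ Icc (0 : ℝ) 1, ∀ t ∈ Icc (0 : ℝ) 1, ‖lam s - lam t‖ ≤ C * |s - t| :=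
  eigenvalue_path_lipschitz_general C u hu hLip lam hcont hsp
end

section
/- Let α be an action of ℤ² on a unital C*-algebra A (a group homomorphism n ↦ αₙ from ℤ² to Aut(A)). If a pair of unitaries u₁, u₂ ∈ A satisfies u₁·α_{ξ₁}(u₂) = u₂·α_{ξ₂}(u₁), where ξ₁ = (1,0), ξ₂ = (0,1), then there exists a unique family of unitaries (uₙ)_{n∈ℤ²} satisfying u_{ξ₁} = u₁, u_{ξ₂} = u₂, and the cocycle identity uₙ·αₙ(u_m) = u_{n+m} for all n, m ∈ ℤ². -/
/-!
A cocycle `u` for an action `φ` of `G` on a group `N` is the same thing as a homomorphic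
section `g ↦ (u g, g)` of the projection `N ⋊[φ] G → G`. A homomorphism out of `ℤ²` is the
same thing as a pair of commuting elements, and `(u₁, ξ₁)` commutes with `(u₂, ξ₂)` in
`unitary A ⋊ ℤ²` exactly when `u₁ · α_{ξ₁}(u₂) = u₂ · α_{ξ₂}(u₁)`.
-/

open Multiplicative

theorem Multiplicative.ofAdd_eq_zpow_mul_zpow (n : ℤ × ℤ) :
    ofAdd n = ofAdd ((1, 0) : ℤ × ℤ) ^ n.1 * ofAdd ((0, 1) : ℤ × ℤ) ^ n.2 := by
  rw [← ofAdd_zsmul, ← ofAdd_zsmul, ← ofAdd_add]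
  congr 1
  ext <;> simp

theorem MonoidHom.ext_mint_prod {M : Type*} [Group M] {f g : Multiplicative (ℤ × ℤ) →* M}
    (h₁ : f (ofAdd (1, 0)) = g (ofAdd (1, 0))) (h₂ : f (ofAdd (0, 1)) = g (ofAdd (0, 1))) :
    f = g := by
  ext n
  show f (ofAdd n) = g (ofAdd n)
  rw [ofAdd_eq_zpow_mul_zpow, map_mul, map_mul, map_zpow, map_zpow, map_zpow, map_zpow, h₁, h₂]

namespace Commute

variable {M : Type*} [Group M] {a b : M}

def zpowersHom₂ (h : Commute a b) : Multiplicative (ℤ × ℤ) →* M :=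
  ((zpowersHom M a).noncommCoprod (zpowersHom M b) fun m n => h.zpow_zpow m.toAdd n.toAdd).comp
    (MulEquiv.prodMultiplicative ℤ ℤ).toMonoidHom

@[simp]
theorem zpowersHom₂_ofAdd (h : Commute a b) (m n : ℤ) :
    h.zpowersHom₂ (ofAdd (m, n)) = a ^ m * b ^ n :=
  rfl

end Commute

section Cocycle

variable {G N : Type*} [Group G] [Group N]

def IsCocycle (φ : G →* MulAut N) (u : G → N) : Prop :=
  ∀ g h, u g * φ g (u h) = u (g * h)

variable {φ : G →* MulAut N}

def IsCocycle.graphHom {u : G → N} (hu : IsCocycle φ u) : G →* N ⋊[φ] G :=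
  MonoidHom.mk' (fun g => ⟨u g, g⟩) fun g h => SemidirectProduct.ext (hu g h).symm rfl

theorem SemidirectProduct.isCocycle_left (F : G →* N ⋊[φ] G) (hF : ∀ g, (F g).right = g) :
    IsCocycle φ fun g => (F g).left := fun g h => by
  dsimp only
  rw [map_mul, SemidirectProduct.mul_left, hF]

end Cocycle

section IntProd

variable {N : Type*} [Group N] {φ : Multiplicative (ℤ × ℤ) →* MulAut N}

theorem IsCocycle.ext_mint_prod {u v : Multiplicative (ℤ × ℤ) → N} (hu : IsCocycle φ u)
    (hv : IsCocycle φ v) (h₁ : u (ofAdd (1, 0)) = v (ofAdd (1, 0)))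
    (h₂ : u (ofAdd (0, 1)) = v (ofAdd (0, 1))) : u = v := by
  have hgraph := MonoidHom.ext_mint_prod (f := hu.graphHom) (g := hv.graphHom)
    (SemidirectProduct.ext h₁ rfl) (SemidirectProduct.ext h₂ rfl)
  funext g
  exact congrArg SemidirectProduct.left (DFunLike.congr_fun hgraph g)

theorem exists_isCocycle_mint_prod (a b : N)
    (h : a * φ (ofAdd (1, 0)) b = b * φ (ofAdd (0, 1)) a) :
    ∃ u, IsCocycle φ u ∧ u (ofAdd (1, 0)) = a ∧ u (ofAdd (0, 1)) = b := by
  have hab : Commute (⟨a, ofAdd (1, 0)⟩ : N ⋊[φ] _) ⟨b, ofAdd (0, 1)⟩ :=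
    SemidirectProduct.ext h (mul_comm _ _)
  have hF : ∀ g, (hab.zpowersHom₂ g).right = g := by
    have : SemidirectProduct.rightHom.comp hab.zpowersHom₂ = MonoidHom.id _ :=
      MonoidHom.ext_mint_prod (by simp) (by simp)
    exact DFunLike.congr_fun this
  exact ⟨_, SemidirectProduct.isCocycle_left _ hF, by simp, by simp⟩

end IntProd

section Unitary

variable {G R A : Type*} [AddGroup G] [Semiring A] [StarMul A] [SMul R A]
  (α : G → A ≃⋆ₐ[R] A) (hα : ∀ n m x, α (n + m) x = α n (α m x))

def unitaryAction : Multiplicative G →* MulAut (unitary A) :=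
  MonoidHom.mk'
    (fun g => (Unitary.mapEquiv
      ⟨(α g.toAdd).toRingEquiv.toMulEquiv, (map_star (α g.toAdd) ·)⟩).toMulEquiv)
    fun g h => MulEquiv.ext fun x => Subtype.ext (hα g.toAdd h.toAdd x)

@[simp]
theorem coe_unitaryAction_apply (n : G) (x : unitary A) :
    (unitaryAction α hα (ofAdd n) x : A) = α n x :=
  rfl

end Unitary

theorem exists_unique_cocycle_of_pair_general {A : Type*} [NormedRing A] [StarRing A]
    [NormedAlgebra ℂ A]
    (α : ℤ × ℤ → A ≃⋆ₐ[ℂ] A)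
    (hαadd : ∀ n m : ℤ × ℤ, ∀ x : A, α (n + m) x = α n (α m x))
    (u₁ u₂ : A) (hu₁ : u₁ ∈ unitary A) (hu₂ : u₂ ∈ unitary A)
    (hcomm : u₁ * α (1, 0) u₂ = u₂ * α (0, 1) u₁) :
    ∃! u : ℤ × ℤ → A,
      (∀ n : ℤ × ℤ, u n ∈ unitary A) ∧
      u (1, 0) = u₁ ∧ u (0, 1) = u₂ ∧
      ∀ n m : ℤ × ℤ, u n * α n (u m) = u (n + m) := by
  obtain ⟨w, hw, hw₁, hw₂⟩ := exists_isCocycle_mint_prod (φ := unitaryAction α hαadd)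
    ⟨u₁, hu₁⟩ ⟨u₂, hu₂⟩ (Subtype.ext (by simpa using hcomm))
  refine ⟨fun n => w (ofAdd n), ⟨fun n => (w _).2, congrArg Subtype.val hw₁,
    congrArg Subtype.val hw₂, fun n m => congrArg Subtype.val (hw (ofAdd n) (ofAdd m))⟩, ?_⟩
  rintro v ⟨hv, hv₁, hv₂, hvc⟩
  have hv_cocycle : IsCocycle (unitaryAction α hαadd)
      fun g => (⟨v g.toAdd, hv _⟩ : unitary A) :=
    fun g h => Subtype.ext (hvc _ _)
  have hvw := hv_cocycle.ext_mint_prod hw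
    (Subtype.ext (hv₁.trans (congrArg Subtype.val hw₁).symm))
    (Subtype.ext (hv₂.trans (congrArg Subtype.val hw₂).symm))
  funext n
  exact congrArg Subtype.val (congrFun hvw (ofAdd n))

/-- Let `α` be an action of `ℤ²` on a unital C*-algebra `A`.  If unitaries `u₁, u₂` satisfy
`u₁ · α_{ξ₁}(u₂) = u₂ · α_{ξ₂}(u₁)`, then there is a unique family of unitaries
`(uₙ)_{n ∈ ℤ²}` with `u_{ξ₁} = u₁`, `u_{ξ₂} = u₂` and the cocycle identity
`uₙ · αₙ(u_m) = u_{n+m}`. -/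
theorem exists_unique_cocycle_of_pair {A : Type*} [NormedRing A] [StarRing A] [CStarRing A]
    [NormedAlgebra ℂ A] [CompleteSpace A] [StarModule ℂ A]
    (α : ℤ × ℤ → A ≃⋆ₐ[ℂ] A)
    (hα₀ : ∀ x : A, α 0 x = x)
    (hαadd : ∀ n m : ℤ × ℤ, ∀ x : A, α (n + m) x = α n (α m x))
    (u₁ u₂ : A) (hu₁ : u₁ ∈ unitary A) (hu₂ : u₂ ∈ unitary A)
    (hcomm : u₁ * α (1, 0) u₂ = u₂ * α (0, 1) u₁) :
    ∃! u : ℤ × ℤ → A,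
      (∀ n : ℤ × ℤ, u n ∈ unitary A) ∧
      u (1, 0) = u₁ ∧ u (0, 1) = u₂ ∧
      ∀ n m : ℤ × ℤ, u n * α n (u m) = u (n + m) :=
  exists_unique_cocycle_of_pair_general α hαadd u₁ u₂ hu₁ hu₂ hcomm
end

section
/- Let A be a unital C*-algebra with tracial state τ, let u be a unitary in A with ‖u − 1‖ < ε < 1, and put a = (2πi)⁻¹ log u (principal branch). Then |τ(a)| ≤ (2π)⁻¹ arcsin ε. -/
/-!
On the spectrum of `u`, which lies on the unit circle within distance `‖u - 1‖ < 1` of `1`, the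
series `-∑ (1 - z)ⁿ⁺¹/(n + 1)` converges uniformly to the principal logarithm `log z = I * arg z`;
hence `seriesLog u = cfc log u = I • cfc arg u`, so `a = (2π)⁻¹ • cfc arg u` is self-adjoint.
A point `z` of the circle has `|arg z| = 2 arcsin (‖z - 1‖ / 2) ≤ 2 arcsin (ε / 2) ≤ arcsin ε`,
which bounds `‖a‖`, and a state satisfies `|τ x| ≤ ‖x‖` on self-adjoint `x` because
`-‖x‖ ≤ x ≤ ‖x‖`.
-/

open scoped Real

open Complex Filter
open scoped ComplexOrder

lemma Real.two_mul_arcsin_half_le {x : ℝ} (hx₀ : 0 ≤ x) (hx₁ : x ≤ 1) :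
    2 * arcsin (x / 2) ≤ arcsin x := by
  have ht₀ : 0 ≤ arcsin (x / 2) := arcsin_nonneg.mpr (by linarith)
  have ht₁ : arcsin (x / 2) ≤ π / 4 := by
    rw [arcsin_le_iff_le_sin ⟨by linarith, by linarith⟩
      ⟨by linarith [pi_pos], by linarith [pi_pos]⟩, sin_pi_div_four]
    nlinarith [sq_sqrt (show (0 : ℝ) ≤ 2 by norm_num), sqrt_nonneg 2]
  rw [le_arcsin_iff_sin_le ⟨by linarith [pi_pos], by linarith⟩ ⟨by linarith, hx₁⟩, sin_two_mul,
    sin_arcsin (by linarith) (by linarith)]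
  nlinarith [cos_arcsin_nonneg (x / 2), cos_le_one (arcsin (x / 2))]

namespace Complex

lemma log_eq_arg_mul_I_of_norm_eq_one {z : ℂ} (hz : ‖z‖ = 1) : log z = arg z * I := by
  rw [log, hz, Real.log_one, ofReal_zero, zero_add]

lemma abs_arg_eq_two_mul_arcsin {z : ℂ} (hz : ‖z‖ = 1) :
    |arg z| = 2 * Real.arcsin (‖z - 1‖ / 2) := by
  have hθ : |arg z| / 2 ∈ Set.Icc (-(π / 2)) (π / 2) :=
    ⟨by linarith [abs_nonneg (arg z), Real.pi_pos], by linarith [abs_arg_le_pi z]⟩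
  have hchord : ‖z - 1‖ = 2 * Real.sin (|arg z| / 2) := by
    conv_lhs => rw [← norm_mul_exp_arg_mul_I z, hz, ofReal_one, one_mul, mul_comm]
    rw [norm_exp_I_mul_ofReal_sub_one, norm_mul, Real.norm_two, Real.norm_eq_abs,
      Real.abs_sin_eq_sin_abs_of_abs_le_pi, abs_div, abs_two]
    rw [abs_div, abs_two]
    linarith [abs_arg_le_pi z, Real.pi_pos]
  rw [hchord, mul_div_cancel_left₀ _ two_ne_zero, Real.arcsin_sin hθ.1 hθ.2]
  ring

end Complex

lemma hasSum_cfc_of_norm_le {ι 𝕜 A : Type*} {p : A → Prop} [RCLike 𝕜] [Ring A] [StarRing A]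
    [TopologicalSpace A] [Algebra 𝕜 A] [ContinuousFunctionalCalculus 𝕜 A p]
    {f : ι → 𝕜 → 𝕜} {M : ι → ℝ} {a : A} (hM : Summable M)
    (hfM : ∀ i, ∀ z ∈ spectrum 𝕜 a, ‖f i z‖ ≤ M i) (hf : ∀ i, ContinuousOn (f i) (spectrum 𝕜 a)) :
    HasSum (fun i ↦ cfc (f i) a) (cfc (fun z ↦ ∑' i, f i z) a) := by
  have hsum := tendsto_cfc_fun (a := a) (tendstoUniformlyOn_tsum hM hfM)
    (Eventually.of_forall fun s ↦ continuousOn_finsetSum s fun i _ ↦ hf i)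
  refine hsum.congr fun s ↦ ?_
  rw [← cfc_sum f a s fun i _ ↦ hf i]
  congr 1
  ext z
  simp

section CStarAlgebra

variable {A : Type*} [CStarAlgebra A]

lemma norm_sub_one_le_of_mem_spectrum {u : A} {z : ℂ} (hz : z ∈ spectrum ℂ u) :
    ‖z - 1‖ ≤ ‖u - 1‖ := by
  obtain _ | _ := subsingleton_or_nontrivial A
  · simp [spectrum.of_subsingleton] at hz
  have hz' : z - 1 ∈ spectrum ℂ (u - algebraMap ℂ A 1) := by
    rw [← spectrum.sub_singleton_eq]
    exact Set.sub_mem_sub hz rfl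
  simpa using spectrum.norm_le_norm_of_mem hz'

lemma spectrum_subset_slitPlane {u : A} (hu : ‖u - 1‖ < 1) : spectrum ℂ u ⊆ slitPlane :=
  fun _ hz ↦ ball_one_subset_slitPlane <| mem_ball_iff_norm.mpr <|
    (norm_sub_one_le_of_mem_spectrum hz).trans_lt hu

lemma seriesLog_eq_cfc_log (u : A) [IsStarNormal u] (hu : ‖u - 1‖ < 1) :
    seriesLog u = cfc log u := by
  set r := ‖u - 1‖
  set f : ℕ → ℂ → ℂ := fun n z ↦ ((n + 1 : ℂ))⁻¹ * (1 - z) ^ (n + 1) with hf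
  have hbound : ∀ n, ∀ z ∈ spectrum ℂ u, ‖f n z‖ ≤ r ^ (n + 1) := by
    intro n z hz
    have hn : (1 : ℝ) ≤ ‖(n + 1 : ℂ)‖ := by norm_cast; simp
    have hz1 : ‖1 - z‖ ≤ r := norm_sub_rev z 1 ▸ norm_sub_one_le_of_mem_spectrum hz
    rw [hf, norm_mul, norm_inv, norm_pow]
    exact (mul_le_of_le_one_left (by positivity) (inv_le_one_of_one_le₀ hn)).trans (by gcongr)
  have hsummable : Summable fun n : ℕ ↦ r ^ (n + 1) :=
    (summable_geometric_of_lt_one (norm_nonneg _) hu).comp_injective (add_left_injective 1)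
  have hcfc := hasSum_cfc_of_norm_le hsummable hbound fun n ↦ by fun_prop
  have hterm : ∀ n, cfc (f n) u = ((n + 1 : ℂ))⁻¹ • (1 - u) ^ (n + 1) := by
    intro n
    rw [hf, cfc_const_mul .., cfc_pow .., cfc_sub .., cfc_const_one .., cfc_id' ..]
  have htaylor : ∀ z ∈ spectrum ℂ u, ∑' n, f n z = -log z := by
    intro z hz
    have h := (hasSum_nat_add_iff' 1).mpr <| hasSum_taylorSeries_neg_log (z := 1 - z) <|
      (norm_sub_rev z 1 ▸ norm_sub_one_le_of_mem_spectrum hz).trans_lt hu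
    simp only [Finset.range_one, Finset.sum_singleton, pow_zero, Nat.cast_zero, div_zero,
      sub_zero, sub_sub_cancel] at h
    refine h.tsum_eq ▸ tsum_congr fun n ↦ ?_
    simp [hf, div_eq_inv_mul]
  rw [seriesLog, (hcfc.congr_fun fun n ↦ (hterm n).symm).tsum_eq, cfc_congr htaylor, cfc_neg,
    neg_neg]

lemma abs_arg_le_arcsin_of_mem_spectrum {u : A} (hu : u ∈ unitary A) {ε : ℝ} (hε : ‖u - 1‖ ≤ ε)
    (hε₁ : ε ≤ 1) {z : ℂ} (hz : z ∈ spectrum ℂ u) : |arg z| ≤ Real.arcsin ε := by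
  have hz₁ : ‖z‖ = 1 := by simpa using spectrum.subset_circle_of_unitary hu hz
  have hzε : ‖z - 1‖ ≤ ε := (norm_sub_one_le_of_mem_spectrum hz).trans hε
  calc |arg z| = 2 * Real.arcsin (‖z - 1‖ / 2) := abs_arg_eq_two_mul_arcsin hz₁
    _ ≤ 2 * Real.arcsin (ε / 2) := by gcongr
    _ ≤ Real.arcsin ε := Real.two_mul_arcsin_half_le ((norm_nonneg _).trans hzε) hε₁

lemma norm_apply_le_of_isSelfAdjoint (τ : A →ₗ[ℂ] ℂ) (hτ1 : τ 1 = 1)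
    (hτpos : ∀ a : A, 0 ≤ (τ (star a * a)).re ∧ (τ (star a * a)).im = 0)
    {x : A} (hx : IsSelfAdjoint x) : ‖τ x‖ ≤ ‖x‖ := by
  let _ := CStarAlgebra.spectralOrder A
  let _ := CStarAlgebra.spectralOrderedRing A
  let φ : A →ₚ[ℂ] ℂ := .mk₀ τ fun y hy ↦ by
    obtain ⟨s, rfl⟩ := CStarAlgebra.nonneg_iff_eq_star_mul_self.mp hy
    exact Complex.nonneg_iff.mpr ⟨(hτpos s).1, (hτpos s).2.symm⟩
  have hτscalar : ∀ r : ℝ, τ (algebraMap ℝ A r) = r := by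
    simp [Algebra.algebraMap_eq_smul_one, hτ1]
  have h₁ : τ x ≤ ‖x‖ := hτscalar ‖x‖ ▸ φ.apply_le_of_isSelfAdjoint x hx
  have h₂ : τ (-x) ≤ ‖x‖ := norm_neg x ▸ hτscalar ‖-x‖ ▸ φ.apply_le_of_isSelfAdjoint (-x) hx.neg
  rw [Complex.le_def] at h₁ h₂
  rw [map_neg] at h₂
  have hreal : τ x = (τ x).re := Complex.ext rfl (by simpa using h₁.2)
  rw [hreal, norm_real, Real.norm_eq_abs, abs_le]
  simp only [neg_re, ofReal_re] at h₁ h₂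
  constructor <;> linarith [h₁.1, h₂.1]

lemma isSelfAdjoint_cfc_ofReal (f : ℂ → ℝ) (u : A) :
    IsSelfAdjoint (cfc (fun z ↦ (f z : ℂ)) u) := by
  rw [IsSelfAdjoint, ← cfc_star]
  simp

lemma cfc_log_eq_I_smul_cfc_arg {u : A} (hu : u ∈ unitary A) (hu₁ : ‖u - 1‖ < 1) :
    cfc log u = I • cfc (fun z ↦ (arg z : ℂ)) u := by
  have harg : ContinuousOn (fun z ↦ (arg z : ℂ)) (spectrum ℂ u) :=
    continuous_ofReal.comp_continuousOn <| continuousOn_arg.mono (spectrum_subset_slitPlane hu₁)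
  rw [← cfc_smul ..]
  refine cfc_congr fun z hz ↦ ?_
  have hz₁ : ‖z‖ = 1 := by simpa using spectrum.subset_circle_of_unitary hu hz
  rw [log_eq_arg_mul_I_of_norm_eq_one hz₁, smul_eq_mul, mul_comm]

lemma norm_cfc_arg_le_arcsin {u : A} (hu : u ∈ unitary A) {ε : ℝ} (hε : ‖u - 1‖ ≤ ε)
    (hε₁ : ε ≤ 1) : ‖cfc (fun z ↦ (arg z : ℂ)) u‖ ≤ Real.arcsin ε :=
  norm_cfc_le (Real.arcsin_nonneg.mpr ((norm_nonneg _).trans hε)) fun z hz ↦ by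
    simpa using abs_arg_le_arcsin_of_mem_spectrum hu hε hε₁ hz

end CStarAlgebra

theorem trace_log_unitary_bound_general {A : Type*} [NormedRing A] [StarRing A] [CStarRing A]
    [NormedAlgebra ℂ A] [CompleteSpace A] [StarModule ℂ A]
    (τ : A →ₗ[ℂ] ℂ) (hτ1 : τ 1 = 1)
    (hτpos : ∀ a : A, 0 ≤ (τ (star a * a)).re ∧ (τ (star a * a)).im = 0)
    (ε : ℝ) (hε : ε < 1)
    (u : A) (hu : u ∈ unitary A) (hdist : ‖u - 1‖ < ε)
    (a : A) (ha : ((2 * π : ℝ) * Complex.I) • a = seriesLog u) :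
    ‖τ a‖ ≤ (2 * π)⁻¹ * Real.arcsin ε := by
  let _ : CStarAlgebra A := { }
  have := isStarNormal_of_mem_unitary hu
  have hu₁ : ‖u - 1‖ < 1 := hdist.trans hε
  set b := cfc (fun z ↦ (arg z : ℂ)) u
  have ha' : a = (2 * π)⁻¹ • b := by
    refine smul_right_injective A (by simp [Real.pi_ne_zero] : ((2 * π : ℝ) * I) ≠ 0) ?_
    dsimp only
    rw [ha, seriesLog_eq_cfc_log u hu₁, cfc_log_eq_I_smul_cfc_arg hu hu₁, ← Complex.coe_smul,
      smul_smul]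
    congr 1
    push_cast
    field_simp
  calc ‖τ a‖ ≤ ‖a‖ := norm_apply_le_of_isSelfAdjoint τ hτ1 hτpos <|
        ha' ▸ (IsSelfAdjoint.all _).smul (isSelfAdjoint_cfc_ofReal arg u)
    _ = (2 * π)⁻¹ * ‖b‖ := by rw [ha', norm_smul, Real.norm_of_nonneg (by positivity)]
    _ ≤ (2 * π)⁻¹ * Real.arcsin ε := by
        gcongr
        exact norm_cfc_arg_le_arcsin hu hdist.le hε.le

/-- Let `τ` be a tracial state on a unital C*-algebra `A` and `u` a unitary with
`‖u - 1‖ < ε < 1`.  If `a = (2πi)⁻¹ log u`, then `|τ(a)| ≤ (2π)⁻¹ arcsin ε`. -/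
theorem trace_log_unitary_bound {A : Type*} [NormedRing A] [StarRing A] [CStarRing A]
    [NormedAlgebra ℂ A] [CompleteSpace A] [StarModule ℂ A]
    (τ : A →ₗ[ℂ] ℂ) (hτ1 : τ 1 = 1)
    (hτpos : ∀ a : A, 0 ≤ (τ (star a * a)).re ∧ (τ (star a * a)).im = 0)
    (hτtr : ∀ a b : A, τ (a * b) = τ (b * a))
    (ε : ℝ) (hε : ε < 1)
    (u : A) (hu : u ∈ unitary A) (hdist : ‖u - 1‖ < ε)
    (a : A) (ha : ((2 * π : ℝ) * Complex.I) • a = seriesLog u) :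
    ‖τ a‖ ≤ (2 * π)⁻¹ * Real.arcsin ε :=
  trace_log_unitary_bound_general τ hτ1 hτpos ε hε u hu hdist a ha
end
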